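/- arXiv:2402.15877 — 2 statements merged into one kernel-verified Lean document; each statement's English description precedes it below -/
import Mathlib

section
/- Let L be a factorial and almost prolongable language over a finite alphabet A such that L_n is nonempty for every n. Then for every positive integer d there exists N such that for all n ≥ N, the number of words v ∈ L_n for which there exist words u, w of length d over A with u·v·w ∈ L is strictly greater than (1 − 1/d)·p(n). (This is Equation (2.3) in the proof of Lemma 2.3 of the paper.) -/
open Filter Topology

variable {A : Type*}

/-- The set of words of `L` of length `n`. -/
def Ln (L : Set (List A)) (n : ℕ) : Set (List A) := {w | w ∈ L ∧ w.length = n}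

/-- The complexity function `p n = |L_n|`. -/
noncomputable def cplx (L : Set (List A)) (n : ℕ) : ℕ := Nat.card (Ln L n)

/-- A language is factorial if it is closed under taking contiguous subwords. -/
def IsFactorial (L : Set (List A)) : Prop := ∀ u v : List A, u ∈ L → v <:+: u → v ∈ L

/-- `w` is left-prolongable in `L`. -/
def LeftProlongable (L : Set (List A)) (w : List A) : Prop := ∃ a : A, (a :: w) ∈ L

/-- `w` is right-prolongable in `L`. -/
def RightProlongable (L : Set (List A)) (w : List A) : Prop := ∃ b : A, (w ++ [b]) ∈ L

/-- `e_l(n)`: the number of words of length `n` in `L` that are not left-prolongable. -/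
noncomputable def eL (L : Set (List A)) (n : ℕ) : ℕ :=
  Nat.card {w : List A | w ∈ Ln L n ∧ ¬ LeftProlongable L w}

/-- `e_r(n)`: the number of words of length `n` in `L` that are not right-prolongable. -/
noncomputable def eR (L : Set (List A)) (n : ℕ) : ℕ :=
  Nat.card {w : List A | w ∈ Ln L n ∧ ¬ RightProlongable L w}

/-- `L` is almost prolongable: `e_l(n)/p(n) → 0` and `e_r(n)/p(n) → 0`. -/
def AlmostProlongable (L : Set (List A)) : Prop :=
  Tendsto (fun n => (eL L n : ℝ) / (cplx L n : ℝ)) atTop (𝓝 0) ∧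
  Tendsto (fun n => (eR L n : ℝ) / (cplx L n : ℝ)) atTop (𝓝 0)

/-!
If `v ∈ L_n` has no right extension of length `d`, extending it to the right as far as possible
gives a non-right-prolongable word of length `n + j`, `j < d`, that begins with `v`; so there are
at most `∑_{j<d} e_r(n+j)` such `v`. If `v w ∈ L_{n+d}` has no left extension of length `d`, the
same argument on the left bounds these by `∑_{j<d} e_l(n+d+j)`. As `L` is factorial,
`p(n+j) ≤ k^j p(n)`, so almost prolongability makes each of these `2d` terms `o(p(n))`: all but
`o(p(n))` words of `L_n` extend by `d` letters on both sides.
-/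

lemma Nat.exists_lt_and_not_succ_of_not {P : ℕ → Prop} (h0 : P 0) {d : ℕ} (hd : ¬ P d) :
    ∃ j < d, P j ∧ ¬ P (j + 1) := by
  induction d with
  | zero => exact absurd h0 hd
  | succ d ih =>
    by_cases h : P d
    · exact ⟨d, d.lt_succ_self, h, hd⟩
    · obtain ⟨j, hj, hPj⟩ := ih h
      exact ⟨j, by omega, hPj⟩

lemma Set.ncard_biUnion_le_sum {ι α : Type*} [DecidableEq ι] (s : Finset ι) (t : ι → Set α) :
    (⋃ i ∈ s, t i).ncard ≤ ∑ i ∈ s, (t i).ncard := by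
  induction s using Finset.induction_on with
  | empty => simp
  | insert i s hi ih =>
    rw [Finset.set_biUnion_insert, Finset.sum_insert hi]
    exact (Set.ncard_union_le _ _).trans (Nat.add_le_add_left ih _)

lemma Filter.Tendsto.div_shift {e p : ℕ → ℝ} {C : ℝ} {j : ℕ} (hp : ∀ n, 0 < p n)
    (he : ∀ n, 0 ≤ e n) (hC : ∀ n, p (n + j) ≤ C * p n)
    (h : Tendsto (fun n => e n / p n) atTop (𝓝 0)) :
    Tendsto (fun n => e (n + j) / p n) atTop (𝓝 0) := by
  have hlim : Tendsto (fun n => C * (e (n + j) / p (n + j))) atTop (𝓝 0) := by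
    simpa using (h.comp (tendsto_add_atTop_nat j)).const_mul C
  refine squeeze_zero (fun n => div_nonneg (he _) (hp n).le) (fun n => ?_) hlim
  rw [div_le_iff₀ (hp n)]
  calc e (n + j) = e (n + j) / p (n + j) * p (n + j) := (div_mul_cancel₀ _ (hp _).ne').symm
    _ ≤ e (n + j) / p (n + j) * (C * p n) :=
        mul_le_mul_of_nonneg_left (hC n) (div_nonneg (he _) (hp _).le)
    _ = C * (e (n + j) / p (n + j)) * p n := by ring

section Words

variable (L : Set (List A))

def RightExtendable (d : ℕ) (v : List A) : Prop := ∃ w : List A, w.length = d ∧ v ++ w ∈ L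

def LeftExtendable (d : ℕ) (v : List A) : Prop := ∃ u : List A, u.length = d ∧ u ++ v ∈ L

def Biextendable (d : ℕ) (v : List A) : Prop :=
  ∃ u w : List A, u.length = d ∧ w.length = d ∧ u ++ v ++ w ∈ L

lemma Ln_finite [Finite A] (n : ℕ) : (Ln L n).Finite :=
  (List.finite_length_eq A n).subset fun _ h => h.2

lemma cplx_pos [Finite A] {n : ℕ} (hne : (Ln L n).Nonempty) : 0 < cplx L n :=
  Nat.card_pos_iff.2 ⟨hne.to_subtype, (Ln_finite L n).to_subtype⟩

lemma eR_eq_ncard (n : ℕ) : eR L n = {x | x ∈ Ln L n ∧ ¬ RightProlongable L x}.ncard :=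
  Nat.card_coe_set_eq _

lemma eL_eq_ncard (n : ℕ) : eL L n = {x | x ∈ Ln L n ∧ ¬ LeftProlongable L x}.ncard :=
  Nat.card_coe_set_eq _

lemma cplx_add_le [Fintype A] (hfac : IsFactorial L) (n j : ℕ) :
    cplx L (n + j) ≤ cplx L n * Fintype.card A ^ j := by
  have hwords : {w : List A | w.length = j}.ncard = Fintype.card A ^ j := by
    rw [← Nat.card_coe_set_eq, ← card_vector, ← Nat.card_eq_fintype_card]
    rfl
  rw [cplx, cplx, Nat.card_coe_set_eq, Nat.card_coe_set_eq, ← hwords, ← Set.ncard_prod]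
  refine Set.ncard_le_ncard_of_injOn (fun x => (x.take n, x.drop n)) ?_ ?_
    ((Ln_finite L n).prod (List.finite_length_eq A j))
  · rintro x ⟨hx, hlen⟩
    exact ⟨⟨hfac x _ hx (List.take_prefix n x).isInfix, by simp [hlen]⟩, by simp [hlen]⟩
  · intro x _ y _ hxy
    simp only [Prod.mk.injEq] at hxy
    rw [← List.take_append_drop n x, ← List.take_append_drop n y, hxy.1, hxy.2]

lemma exists_not_rightProlongable {d : ℕ} {v : List A} (hv : v ∈ L)
    (hd : ¬ RightExtendable L d v) :
    ∃ w : List A, w.length < d ∧ v ++ w ∈ L ∧ ¬ RightProlongable L (v ++ w) := by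
  obtain ⟨j, hjd, ⟨w, hw, hvw⟩, hmax⟩ :=
    Nat.exists_lt_and_not_succ_of_not (P := fun j => RightExtendable L j v)
      ⟨[], rfl, by simpa using hv⟩ hd
  exact ⟨w, hw ▸ hjd, hvw, fun ⟨b, hb⟩ =>
    hmax ⟨w ++ [b], by simp [hw], by simpa using hb⟩⟩

lemma exists_not_leftProlongable {d : ℕ} {v : List A} (hv : v ∈ L)
    (hd : ¬ LeftExtendable L d v) :
    ∃ u : List A, u.length < d ∧ u ++ v ∈ L ∧ ¬ LeftProlongable L (u ++ v) := by
  obtain ⟨j, hjd, ⟨u, hu, huv⟩, hmax⟩ :=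
    Nat.exists_lt_and_not_succ_of_not (P := fun j => LeftExtendable L j v)
      ⟨[], rfl, by simpa using hv⟩ hd
  exact ⟨u, hu ▸ hjd, huv, fun ⟨a, ha⟩ =>
    hmax ⟨a :: u, by simp [hu], by simpa using ha⟩⟩

variable [Finite A]

lemma ncard_not_rightExtendable_le (d n : ℕ) :
    (Ln L n \ {v | RightExtendable L d v}).ncard ≤ ∑ j ∈ Finset.range d, eR L (n + j) := by
  set T : ℕ → Set (List A) := fun j => {x | x ∈ Ln L (n + j) ∧ ¬ RightProlongable L x}
  have hsub : Ln L n \ {v | RightExtendable L d v} ⊆ ⋃ j ∈ Finset.range d, List.take n '' T j := by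
    rintro v ⟨⟨hv, hlen⟩, hd⟩
    obtain ⟨w, hwd, hvw, hmax⟩ := exists_not_rightProlongable L hv hd
    refine Set.mem_biUnion (Finset.mem_range.2 hwd) ⟨v ++ w, ⟨⟨hvw, by simp [hlen]⟩, hmax⟩, ?_⟩
    exact List.take_left' hlen
  have hT : ∀ j, (T j).Finite := fun j => (Ln_finite L _).subset fun _ h => h.1
  calc _ ≤ (⋃ j ∈ Finset.range d, List.take n '' T j).ncard :=
        Set.ncard_le_ncard hsub ((Finset.range d).finite_toSet.biUnion fun j _ => (hT j).image _)
    _ ≤ ∑ j ∈ Finset.range d, (List.take n '' T j).ncard := Set.ncard_biUnion_le_sum _ _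
    _ ≤ ∑ j ∈ Finset.range d, eR L (n + j) :=
        Finset.sum_le_sum fun j _ => (eR_eq_ncard L _).symm ▸ Set.ncard_image_le (hT j)

lemma ncard_not_leftExtendable_le (d n : ℕ) :
    (Ln L n \ {v | LeftExtendable L d v}).ncard ≤ ∑ j ∈ Finset.range d, eL L (n + j) := by
  set T : ℕ → Set (List A) := fun j => {x | x ∈ Ln L (n + j) ∧ ¬ LeftProlongable L x}
  have hsub : Ln L n \ {v | LeftExtendable L d v} ⊆
      ⋃ j ∈ Finset.range d, List.drop j '' T j := by
    rintro v ⟨⟨hv, hlen⟩, hd⟩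
    obtain ⟨u, hud, huv, hmax⟩ := exists_not_leftProlongable L hv hd
    refine Set.mem_biUnion (Finset.mem_range.2 hud)
      ⟨u ++ v, ⟨⟨huv, by simp [hlen, add_comm]⟩, hmax⟩, List.drop_left' rfl⟩
  have hT : ∀ j, (T j).Finite := fun j => (Ln_finite L _).subset fun _ h => h.1
  calc _ ≤ (⋃ j ∈ Finset.range d, List.drop j '' T j).ncard :=
        Set.ncard_le_ncard hsub ((Finset.range d).finite_toSet.biUnion fun j _ => (hT j).image _)
    _ ≤ ∑ j ∈ Finset.range d, (List.drop j '' T j).ncard := Set.ncard_biUnion_le_sum _ _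
    _ ≤ ∑ j ∈ Finset.range d, eL L (n + j) :=
        Finset.sum_le_sum fun j _ => (eL_eq_ncard L _).symm ▸ Set.ncard_image_le (hT j)

lemma ncard_not_biextendable_le (d n : ℕ) :
    (Ln L n \ {v | Biextendable L d v}).ncard ≤
      ∑ j ∈ Finset.range d, eR L (n + j) + ∑ j ∈ Finset.range d, eL L (n + d + j) := by
  have hsub : Ln L n \ {v | Biextendable L d v} ⊆ (Ln L n \ {v | RightExtendable L d v}) ∪
      List.take n '' (Ln L (n + d) \ {x | LeftExtendable L d x}) := by
    rintro v ⟨⟨hv, hlen⟩, hbi⟩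
    by_cases hright : RightExtendable L d v
    · obtain ⟨w, hw, hvw⟩ := hright
      refine Or.inr ⟨v ++ w, ⟨⟨hvw, by simp [hlen, hw]⟩, ?_⟩, List.take_left' hlen⟩
      rintro ⟨u, hu, huvw⟩
      exact hbi ⟨u, w, hu, hw, by simpa using huvw⟩
    · exact Or.inl ⟨⟨hv, hlen⟩, hright⟩
  calc _ ≤ _ := Set.ncard_le_ncard hsub (((Ln_finite L n).sdiff).union
        (((Ln_finite L _).sdiff).image _))
    _ ≤ _ := Set.ncard_union_le _ _
    _ ≤ _ := Nat.add_le_add (ncard_not_rightExtendable_le L d n)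
        ((Set.ncard_image_le ((Ln_finite L _).sdiff)).trans (ncard_not_leftExtendable_le L d _))

end Words

theorem tendsto_ncard_not_biextendable_div_cplx [Fintype A] (L : Set (List A))
    (hfac : IsFactorial L) (hap : AlmostProlongable L) (hne : ∀ n, (Ln L n).Nonempty) (d : ℕ) :
    Tendsto (fun n => ((Ln L n \ {v | Biextendable L d v}).ncard : ℝ) / cplx L n)
      atTop (𝓝 0) := by
  have hp : ∀ n, 0 < (cplx L n : ℝ) := fun n => Nat.cast_pos.2 (cplx_pos L (hne n))
  have hgrowth : ∀ j n, (cplx L (n + j) : ℝ) ≤ (Fintype.card A : ℝ) ^ j * cplx L n := fun j n => by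
    rw [mul_comm]; exact_mod_cast cplx_add_le L hfac n j
  have hR : ∀ j, Tendsto (fun n => (eR L (n + j) : ℝ) / cplx L n) atTop (𝓝 0) := fun j =>
    hap.2.div_shift hp (fun _ => Nat.cast_nonneg _) (hgrowth j)
  have hL : ∀ j, Tendsto (fun n => (eL L (n + d + j) : ℝ) / cplx L n) atTop (𝓝 0) := fun j => by
    simpa only [add_assoc] using hap.1.div_shift hp (fun _ => Nat.cast_nonneg _) (hgrowth (d + j))
  have hsum := (tendsto_finsetSum (Finset.range d) fun j _ => hR j).add
    (tendsto_finsetSum (Finset.range d) fun j _ => hL j)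
  simp only [Finset.sum_const_zero, add_zero] at hsum
  refine squeeze_zero (fun n => div_nonneg (Nat.cast_nonneg _) (hp n).le) (fun n => ?_) hsum
  rw [← Finset.sum_div, ← Finset.sum_div, ← add_div]
  gcongr
  exact_mod_cast ncard_not_biextendable_le L d n

theorem almost_prolongable_many_biprolongable_words {A : Type*} [Fintype A]
    (L : Set (List A)) (hfac : IsFactorial L) (hap : AlmostProlongable L)
    (hne : ∀ n : ℕ, (Ln L n).Nonempty) :
    ∀ d : ℕ, 0 < d → ∃ N : ℕ, ∀ n ≥ N,
      (1 - 1 / (d : ℝ)) * (cplx L n : ℝ) <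
        (Nat.card {v : List A | v ∈ Ln L n ∧
          ∃ u w : List A, u.length = d ∧ w.length = d ∧ (u ++ v ++ w) ∈ L} : ℝ) := by
  intro d hd
  obtain ⟨N, hN⟩ := eventually_atTop.1
    ((tendsto_ncard_not_biextendable_div_cplx L hfac hap hne d).eventually
      (gt_mem_nhds (one_div_pos.2 (Nat.cast_pos.2 hd))))
  refine ⟨N, fun n hn => ?_⟩
  have hsplit : (cplx L n : ℝ) = (Ln L n ∩ {v | Biextendable L d v}).ncard +
      (Ln L n \ {v | Biextendable L d v}).ncard := by
    rw [cplx, Nat.card_coe_set_eq,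
      ← Set.ncard_inter_add_ncard_sdiff_eq_ncard _ _ (Ln_finite L n), Nat.cast_add]
  have hfew := hN n hn
  rw [div_lt_iff₀ (Nat.cast_pos.2 (cplx_pos L (hne n)))] at hfew
  rw [Nat.card_coe_set_eq]
  change _ < ((Ln L n ∩ {v | Biextendable L d v}).ncard : ℝ)
  linarith
end

section
/- Let L be a factorial and almost prolongable language over a finite alphabet with unbounded complexity, and suppose there exists N₀ such that e(n) = 0 for all n ≥ N₀. Suppose there exist reals α ∈ [0, 1/2), β ∈ [1, 3/2), γ ∈ (3·max(α, β−1), β] and positive constants C₁, C₂ such that e_l(n) = O(n^α), e_r(n) = O(n^α), and C₁·n^γ ≤ p(n) ≤ C₂·n^β for all sufficiently large n. Then lim_{n→∞} p(n+1)/p(n) = 1. (This is the complexity conclusion established in the proof of Corollary 2.7; by the paper's main criterion it is equivalent, under the stated hypotheses, to the Benjamini–Schramm convergence of the Rauzy digraphs of L to the directed line.) -/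
open Filter Topology

variable {A : Type*}

/-- `e(n)`: the number of words of length `n` in `L` that are neither left- nor
right-prolongable. -/
noncomputable def eBoth (L : Set (List A)) (n : ℕ) : ℕ :=
  Nat.card {w : List A | w ∈ Ln L n ∧ ¬ LeftProlongable L w ∧ ¬ RightProlongable L w}

set_option linter.unusedSectionVars false

-- auxiliary definitions
def RightSpecialW (L : Set (List A)) (w : List A) : Prop :=
  ∃ b c : A, b ≠ c ∧ w ++ [b] ∈ L ∧ w ++ [c] ∈ L
def LeftSpecialW (L : Set (List A)) (w : List A) : Prop :=
  ∃ b c : A, b ≠ c ∧ (b :: w) ∈ L ∧ (c :: w) ∈ L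

noncomputable def rsC (L : Set (List A)) (n : ℕ) : ℕ :=
  Nat.card {w : List A | w ∈ Ln L n ∧ RightSpecialW L w}
noncomputable def lsC (L : Set (List A)) (n : ℕ) : ℕ :=
  Nat.card {w : List A | w ∈ Ln L n ∧ LeftSpecialW L w}
noncomputable def bsC (L : Set (List A)) (n : ℕ) : ℕ :=
  Nat.card {w : List A | w ∈ Ln L n ∧ (LeftSpecialW L w ∧ RightSpecialW L w)}

section Counting
variable [Fintype A] {L : Set (List A)}

lemma finite_Ln (L : Set (List A)) (n : ℕ) : (Ln L n).Finite :=
  (List.finite_length_eq A n).subset (fun _ hw => hw.2)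

lemma finite_sub {n : ℕ} {s : Set (List A)} (h : ∀ w ∈ s, w ∈ Ln L n) : s.Finite :=
  (finite_Ln L n).subset h

lemma cplx_eq (L : Set (List A)) (n : ℕ) : cplx L n = (Ln L n).ncard :=
  Nat.card_coe_set_eq _

lemma rsC_eq (L : Set (List A)) (n : ℕ) :
    rsC L n = {w : List A | w ∈ Ln L n ∧ RightSpecialW L w}.ncard :=
  Nat.card_coe_set_eq _

lemma lsC_eq (L : Set (List A)) (n : ℕ) :
    lsC L n = {w : List A | w ∈ Ln L n ∧ LeftSpecialW L w}.ncard :=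
  Nat.card_coe_set_eq _

lemma bsC_eq (L : Set (List A)) (n : ℕ) :
    bsC L n = {w : List A | w ∈ Ln L n ∧ (LeftSpecialW L w ∧ RightSpecialW L w)}.ncard :=
  Nat.card_coe_set_eq _

lemma eR_eq (L : Set (List A)) (n : ℕ) :
    eR L n = {w : List A | w ∈ Ln L n ∧ ¬ RightProlongable L w}.ncard :=
  Nat.card_coe_set_eq _

lemma eL_eq (L : Set (List A)) (n : ℕ) :
    eL L n = {w : List A | w ∈ Ln L n ∧ ¬ LeftProlongable L w}.ncard :=
  Nat.card_coe_set_eq _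

lemma rsC_le_cplx (L : Set (List A)) (n : ℕ) : rsC L n ≤ cplx L n := by
  rw [rsC_eq, cplx_eq]
  exact Set.ncard_le_ncard (fun w hw => hw.1) (finite_Ln L n)

lemma lsC_le_cplx (L : Set (List A)) (n : ℕ) : lsC L n ≤ cplx L n := by
  rw [lsC_eq, cplx_eq]
  exact Set.ncard_le_ncard (fun w hw => hw.1) (finite_Ln L n)

lemma bsC_le_rsC (L : Set (List A)) (n : ℕ) : bsC L n ≤ rsC L n := by
  rw [bsC_eq, rsC_eq]
  exact Set.ncard_le_ncard (fun w hw => ⟨hw.1, hw.2.2⟩) (finite_sub (fun w hw => hw.1))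



example (w : List A) (b : A) : (w ++ [b]).length = w.length + 1 := by simp

-- second extension avoiding a given letter
lemma RightSpecialW.exists_ne {w : List A} (hw : RightSpecialW L w) (a : A) :
    ∃ b : A, b ≠ a ∧ w ++ [b] ∈ L := by
  obtain ⟨b, c, hbc, hb, hc⟩ := hw
  by_cases h : b = a
  · exact ⟨c, by rw [← h]; exact hbc.symm, hc⟩
  · exact ⟨b, h, hb⟩

lemma LeftSpecialW.exists_ne {w : List A} (hw : LeftSpecialW L w) (a : A) :
    ∃ b : A, b ≠ a ∧ (b :: w) ∈ L := by
  obtain ⟨b, c, hbc, hb, hc⟩ := hw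
  by_cases h : b = a
  · exact ⟨c, by rw [← h]; exact hbc.symm, hc⟩
  · exact ⟨b, h, hb⟩

lemma count_L2 (L : Set (List A)) (n : ℕ) :
    rsC L n + cplx L n ≤ cplx L (n + 1) + eR L n := by
  classical
  set RP : Set (List A) := {w | w ∈ Ln L n ∧ RightProlongable L w} with hRPdef
  have hRPfin : RP.Finite := finite_sub (fun w hw => hw.1)
  have hRSfin : {w : List A | w ∈ Ln L n ∧ RightSpecialW L w}.Finite :=
    finite_sub (fun w hw => hw.1)
  have hfin1 := finite_Ln L (n + 1)
  haveI := hRPfin.to_subtype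
  haveI := hRSfin.to_subtype
  haveI := hfin1.to_subtype
  -- step 1 : cplx ≤ |RP| + eR
  have step1 : cplx L n ≤ RP.ncard + eR L n := by
    rw [cplx_eq, eR_eq]
    have hcover : Ln L n ⊆ RP ∪ {w : List A | w ∈ Ln L n ∧ ¬ RightProlongable L w} := by
      intro w hw
      by_cases h : RightProlongable L w
      · exact Or.inl ⟨hw, h⟩
      · exact Or.inr ⟨hw, h⟩
    calc (Ln L n).ncard
        ≤ (RP ∪ {w : List A | w ∈ Ln L n ∧ ¬ RightProlongable L w}).ncard :=
          Set.ncard_le_ncard hcover (hRPfin.union (finite_sub (fun w hw => hw.1)))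
      _ ≤ _ := Set.ncard_union_le _ _
  -- step 2 : |RS| + |RP| ≤ cplx (n+1)
  have step2 : rsC L n + RP.ncard ≤ cplx L (n + 1) := by
    have hsub : {w : List A | w ∈ Ln L n ∧ RightSpecialW L w} ⊆ RP := by
      rintro w ⟨hw, b, c, hbc, hb, hc⟩
      exact ⟨hw, b, hb⟩
    -- choice functions
    let σ : RP → A := fun w => Classical.choose w.2.2
    have hσ : ∀ w : RP, (w : List A) ++ [σ w] ∈ L := fun w => Classical.choose_spec w.2.2
    let τ : {w : List A | w ∈ Ln L n ∧ RightSpecialW L w} → A :=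
      fun w => Classical.choose (w.2.2.exists_ne (σ ⟨w.1, hsub w.2⟩))
    have hτ : ∀ w : {w : List A | w ∈ Ln L n ∧ RightSpecialW L w},
        τ w ≠ σ ⟨w.1, hsub w.2⟩ ∧ (w : List A) ++ [τ w] ∈ L :=
      fun w => Classical.choose_spec (w.2.2.exists_ne (σ ⟨w.1, hsub w.2⟩))
    let F : {w : List A | w ∈ Ln L n ∧ RightSpecialW L w} ⊕ RP → (Ln L (n + 1) : Set (List A)) :=
      fun x => match x with
      | Sum.inl w => ⟨(w : List A) ++ [τ w], ⟨(hτ w).2, by simp [w.2.1.2]⟩⟩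
      | Sum.inr w => ⟨(w : List A) ++ [σ w], ⟨hσ w, by simp [w.2.1.2]⟩⟩
    have hFinj : Function.Injective F := by
      rintro (w | w) (w' | w') h
      · have h' : (w : List A) ++ [τ w] = (w' : List A) ++ [τ w'] := congrArg Subtype.val h
        obtain ⟨h1, h2⟩ := List.append_inj h' (by rw [w.2.1.2, w'.2.1.2])
        congr 1
        exact Subtype.ext h1
      · exfalso
        have h' : (w : List A) ++ [τ w] = (w' : List A) ++ [σ w'] := congrArg Subtype.val h
        obtain ⟨h1, h2⟩ := List.append_inj h' (by rw [w.2.1.2, w'.2.1.2])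
        have hww' : w' = ⟨w.1, hsub w.2⟩ := Subtype.ext h1.symm
        have := (hτ w).1
        rw [← hww'] at this
        exact this (List.singleton_injective h2)
      · exfalso
        have h' : (w : List A) ++ [σ w] = (w' : List A) ++ [τ w'] := congrArg Subtype.val h
        obtain ⟨h1, h2⟩ := List.append_inj h' (by rw [w.2.1.2, w'.2.1.2])
        have hww' : w = ⟨w'.1, hsub w'.2⟩ := Subtype.ext h1
        have := (hτ w').1
        rw [← hww'] at this
        exact this (List.singleton_injective h2).symm
      · have h' : (w : List A) ++ [σ w] = (w' : List A) ++ [σ w'] := congrArg Subtype.val h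
        obtain ⟨h1, h2⟩ := List.append_inj h' (by rw [w.2.1.2, w'.2.1.2])
        congr 1
        exact Subtype.ext h1
    have := Nat.card_le_card_of_injective F hFinj
    rwa [Nat.card_sum, Nat.card_coe_set_eq, Nat.card_coe_set_eq, ← rsC_eq] at this
  omega





lemma count_L3 (L : Set (List A)) (n : ℕ) :
    lsC L n + cplx L n ≤ cplx L (n + 1) + eL L n := by
  classical
  set LP : Set (List A) := {w | w ∈ Ln L n ∧ LeftProlongable L w} with hLPdef
  have hLPfin : LP.Finite := finite_sub (fun w hw => hw.1)
  have hLSfin : {w : List A | w ∈ Ln L n ∧ LeftSpecialW L w}.Finite :=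
    finite_sub (fun w hw => hw.1)
  have hfin1 := finite_Ln L (n + 1)
  haveI := hLPfin.to_subtype
  haveI := hLSfin.to_subtype
  haveI := hfin1.to_subtype
  have step1 : cplx L n ≤ LP.ncard + eL L n := by
    rw [cplx_eq, eL_eq]
    have hcover : Ln L n ⊆ LP ∪ {w : List A | w ∈ Ln L n ∧ ¬ LeftProlongable L w} := by
      intro w hw
      by_cases h : LeftProlongable L w
      · exact Or.inl ⟨hw, h⟩
      · exact Or.inr ⟨hw, h⟩
    calc (Ln L n).ncard
        ≤ (LP ∪ {w : List A | w ∈ Ln L n ∧ ¬ LeftProlongable L w}).ncard :=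
          Set.ncard_le_ncard hcover (hLPfin.union (finite_sub (fun w hw => hw.1)))
      _ ≤ _ := Set.ncard_union_le _ _
  have step2 : lsC L n + LP.ncard ≤ cplx L (n + 1) := by
    have hsub : {w : List A | w ∈ Ln L n ∧ LeftSpecialW L w} ⊆ LP := by
      rintro w ⟨hw, b, c, hbc, hb, hc⟩
      exact ⟨hw, b, hb⟩
    let σ : LP → A := fun w => Classical.choose w.2.2
    have hσ : ∀ w : LP, (σ w :: (w : List A)) ∈ L := fun w => Classical.choose_spec w.2.2
    let τ : {w : List A | w ∈ Ln L n ∧ LeftSpecialW L w} → A :=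
      fun w => Classical.choose (w.2.2.exists_ne (σ ⟨w.1, hsub w.2⟩))
    have hτ : ∀ w : {w : List A | w ∈ Ln L n ∧ LeftSpecialW L w},
        τ w ≠ σ ⟨w.1, hsub w.2⟩ ∧ (τ w :: (w : List A)) ∈ L :=
      fun w => Classical.choose_spec (w.2.2.exists_ne (σ ⟨w.1, hsub w.2⟩))
    let F : {w : List A | w ∈ Ln L n ∧ LeftSpecialW L w} ⊕ LP → (Ln L (n + 1) : Set (List A)) :=
      fun x => match x with
      | Sum.inl w => ⟨τ w :: (w : List A), ⟨(hτ w).2, by simp [w.2.1.2]⟩⟩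
      | Sum.inr w => ⟨σ w :: (w : List A), ⟨hσ w, by simp [w.2.1.2]⟩⟩
    have hFinj : Function.Injective F := by
      rintro (w | w) (w' | w') h
      · have h' : τ w :: (w : List A) = τ w' :: (w' : List A) := congrArg Subtype.val h
        rw [List.cons.injEq] at h'
        congr 1
        exact Subtype.ext h'.2
      · exfalso
        have h' : τ w :: (w : List A) = σ w' :: (w' : List A) := congrArg Subtype.val h
        rw [List.cons.injEq] at h'
        have hww' : w' = ⟨w.1, hsub w.2⟩ := Subtype.ext h'.2.symm
        have := (hτ w).1
        rw [← hww'] at this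
        exact this h'.1
      · exfalso
        have h' : σ w :: (w : List A) = τ w' :: (w' : List A) := congrArg Subtype.val h
        rw [List.cons.injEq] at h'
        have hww' : w = ⟨w'.1, hsub w'.2⟩ := Subtype.ext h'.2
        have := (hτ w').1
        rw [← hww'] at this
        exact this h'.1.symm
      · have h' : σ w :: (w : List A) = σ w' :: (w' : List A) := congrArg Subtype.val h
        rw [List.cons.injEq] at h'
        congr 1
        exact Subtype.ext h'.2
    have := Nat.card_le_card_of_injective F hFinj
    rwa [Nat.card_sum, Nat.card_coe_set_eq, Nat.card_coe_set_eq, ← lsC_eq] at this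
  omega

lemma count_L4 (hfac : IsFactorial L) (n : ℕ) :
    cplx L (n + 1) + rsC L n ≤ cplx L n + (Fintype.card A + 1) * rsC L n := by
  classical
  set RS : Set (List A) := {w | w ∈ Ln L n ∧ RightSpecialW L w} with hRSdef
  have hRSfin : RS.Finite := finite_sub (fun w hw => hw.1)
  set X : Set (List A) := {w | w ∈ Ln L (n+1) ∧ ¬ RightSpecialW L w.dropLast} with hXdef
  set Y : Set (List A) := {w | w ∈ Ln L (n+1) ∧ RightSpecialW L w.dropLast} with hYdef
  have hXfin : X.Finite := finite_sub fun w hw => hw.1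
  have hYfin : Y.Finite := finite_sub fun w hw => hw.1
  have hdrop : ∀ w, w ∈ Ln L (n+1) → w.dropLast ∈ Ln L n ∧ w ≠ [] := by
    intro w hw
    have hne : w ≠ [] := by
      intro h
      rw [h] at hw
      simp [Ln] at hw
    refine ⟨⟨hfac w _ hw.1 (List.dropLast_prefix w).isInfix, ?_⟩, hne⟩
    rw [List.length_dropLast, hw.2]
    omega
  have split : cplx L (n+1) ≤ X.ncard + Y.ncard := by
    rw [cplx_eq]
    have hcover : Ln L (n+1) ⊆ X ∪ Y := by
      intro w hw
      by_cases h : RightSpecialW L w.dropLast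
      · exact Or.inr ⟨hw, h⟩
      · exact Or.inl ⟨hw, h⟩
    calc (Ln L (n+1)).ncard ≤ (X ∪ Y).ncard :=
          Set.ncard_le_ncard hcover (hXfin.union hYfin)
      _ ≤ _ := Set.ncard_union_le _ _
  have hX : X.ncard ≤ (Ln L n \ RS).ncard := by
    refine Set.ncard_le_ncard_of_injOn (fun w => w.dropLast) ?_ ?_ ((finite_Ln L n).diff (t := RS))
    · intro w hw
      exact ⟨(hdrop w hw.1).1, fun hmem => hw.2 hmem.2⟩
    · intro w hw w' hw' h
      replace h : w.dropLast = w'.dropLast := h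
      have hne := (hdrop w hw.1).2
      have hne' := (hdrop w' hw'.1).2
      by_cases hg : w.getLast hne = w'.getLast hne'
      · rw [← List.dropLast_concat_getLast hne, ← List.dropLast_concat_getLast hne', h, hg]
      · exfalso
        apply hw.2
        refine ⟨w.getLast hne, w'.getLast hne', hg, ?_, ?_⟩
        · rw [List.dropLast_concat_getLast hne]
          exact hw.1.1
        · rw [h, List.dropLast_concat_getLast hne']
          exact hw'.1.1
  have hY : Y.ncard ≤ (Fintype.card A + 1) * rsC L n := by
    haveI := hYfin.to_subtype
    haveI := hRSfin.to_subtype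
    have key : Nat.card Y ≤ Nat.card (Option A × RS) := by
      apply Nat.card_le_card_of_injective
        (fun w : Y => ((w : List A).getLast?,
          (⟨(w : List A).dropLast, (hdrop w.1 w.2.1).1, w.2.2⟩ : RS)))
      intro w w' h
      rw [Prod.mk.injEq] at h
      have h2 : (w : List A).dropLast = (w' : List A).dropLast := congrArg Subtype.val h.2
      have hne := (hdrop w.1 w.2.1).2
      have hne' := (hdrop w'.1 w'.2.1).2
      have h1 := h.1
      rw [List.getLast?_eq_getLast hne, List.getLast?_eq_getLast hne'] at h1
      have hg : (w : List A).getLast hne = (w' : List A).getLast hne' := Option.some_injective _ h1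
      apply Subtype.ext
      rw [← List.dropLast_concat_getLast hne, ← List.dropLast_concat_getLast hne', h2, hg]
    rw [Nat.card_prod, Nat.card_eq_fintype_card (α := Option A), Fintype.card_option,
      Nat.card_coe_set_eq, Nat.card_coe_set_eq, ← rsC_eq] at key
    exact key
  have hdiff : (Ln L n \ RS).ncard = cplx L n - rsC L n := by
    rw [cplx_eq, rsC_eq, ← hRSdef, Set.ncard_diff (fun w hw => hw.1) hRSfin]
  have hrs := rsC_le_cplx L n
  rw [hdiff] at hX
  omega

lemma count_L5 (hfac : IsFactorial L) (n : ℕ) :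
    rsC L (n + 1) + bsC L n ≤ rsC L n + (Fintype.card A + 1) * bsC L n := by
  classical
  set RSn : Set (List A) := {w | w ∈ Ln L n ∧ RightSpecialW L w} with hRSdef
  set BSn : Set (List A) := {w | w ∈ Ln L n ∧ (LeftSpecialW L w ∧ RightSpecialW L w)} with hBSdef
  set RS1 : Set (List A) := {w | w ∈ Ln L (n+1) ∧ RightSpecialW L w} with hRS1def
  have hRSfin : RSn.Finite := finite_sub (fun w hw => hw.1)
  have hBSfin : BSn.Finite := finite_sub (fun w hw => hw.1)
  have hRS1fin : RS1.Finite := finite_sub (fun w hw => hw.1)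
  have htail : ∀ w, w ∈ RS1 → (w.tail ∈ Ln L n ∧ RightSpecialW L w.tail) ∧ w ≠ [] := by
    intro w hw
    have hlen1 : w.length = n + 1 := hw.1.2
    have hne : w ≠ [] := by
      intro h
      rw [h] at hlen1
      simp at hlen1
    have htl : ∀ b : A, w ++ [b] ∈ L → w.tail ++ [b] ∈ L := by
      intro b hb
      have : (w ++ [b]).tail = w.tail ++ [b] := by
        cases w with
        | nil => exact absurd rfl hne
        | cons a t => simp
      rw [← this]
      exact hfac _ _ hb (List.tail_suffix _).isInfix
    obtain ⟨b, c, hbc, hb, hc⟩ := hw.2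
    refine ⟨⟨⟨hfac w _ hw.1.1 (List.tail_suffix w).isInfix, ?_⟩, b, c, hbc, htl b hb, htl c hc⟩, hne⟩
    rw [List.length_tail, hw.1.2]
    omega
  set X : Set (List A) := {w | w ∈ RS1 ∧ ¬ LeftSpecialW L w.tail} with hXdef
  set Y : Set (List A) := {w | w ∈ RS1 ∧ LeftSpecialW L w.tail} with hYdef
  have hXfin : X.Finite := finite_sub fun w hw => hw.1.1
  have hYfin : Y.Finite := finite_sub fun w hw => hw.1.1
  have split : rsC L (n+1) ≤ X.ncard + Y.ncard := by
    rw [rsC_eq]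
    have hcover : {w : List A | w ∈ Ln L (n+1) ∧ RightSpecialW L w} ⊆ X ∪ Y := by
      intro w hw
      by_cases h : LeftSpecialW L w.tail
      · exact Or.inr ⟨hw, h⟩
      · exact Or.inl ⟨hw, h⟩
    calc _ ≤ (X ∪ Y).ncard := Set.ncard_le_ncard hcover (hXfin.union hYfin)
      _ ≤ _ := Set.ncard_union_le _ _
  have hX : X.ncard ≤ (RSn \ BSn).ncard := by
    refine Set.ncard_le_ncard_of_injOn (fun w => w.tail) ?_ ?_ (hRSfin.diff (t := BSn))
    · intro w hw
      exact ⟨(htail w hw.1).1, fun hmem => hw.2 hmem.2.1⟩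
    · intro w hw w' hw' h
      replace h : w.tail = w'.tail := h
      have hne := (htail w hw.1).2
      have hne' := (htail w' hw'.1).2
      by_cases hg : w.head hne = w'.head hne'
      · rw [← List.cons_head_tail hne, ← List.cons_head_tail hne', h, hg]
      · exfalso
        apply hw.2
        refine ⟨w.head hne, w'.head hne', hg, ?_, ?_⟩
        · rw [List.cons_head_tail]
          exact hw.1.1.1
        · rw [h, List.cons_head_tail]
          exact hw'.1.1.1
  have hY : Y.ncard ≤ (Fintype.card A + 1) * bsC L n := by
    haveI := hYfin.to_subtype
    haveI := hBSfin.to_subtype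
    have key : Nat.card Y ≤ Nat.card (Option A × BSn) := by
      apply Nat.card_le_card_of_injective
        (fun w : Y => ((w : List A).head?,
          (⟨(w : List A).tail, (htail w.1 w.2.1).1.1, w.2.2, (htail w.1 w.2.1).1.2⟩ : BSn)))
      intro w w' h
      rw [Prod.mk.injEq] at h
      have h2 : (w : List A).tail = (w' : List A).tail := congrArg Subtype.val h.2
      have hne := (htail w.1 w.2.1).2
      have hne' := (htail w'.1 w'.2.1).2
      have h1 := h.1
      rw [List.head?_eq_head hne, List.head?_eq_head hne'] at h1
      have hg : (w : List A).head hne = (w' : List A).head hne' := Option.some_injective _ h1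
      apply Subtype.ext
      rw [← List.cons_head_tail (l := (w : List A)) hne, ← List.cons_head_tail (l := (w' : List A)) hne', h2, hg]
    rw [Nat.card_prod, Nat.card_eq_fintype_card (α := Option A), Fintype.card_option,
      Nat.card_coe_set_eq, Nat.card_coe_set_eq, ← bsC_eq] at key
    exact key
  have hdiff : (RSn \ BSn).ncard = rsC L n - bsC L n := by
    rw [rsC_eq, bsC_eq, ← hRSdef, ← hBSdef, Set.ncard_diff (show BSn ⊆ RSn from fun w hw => ⟨hw.1, hw.2.2⟩) hBSfin]
  have hbs := bsC_le_rsC L n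
  rw [hdiff] at hX
  omega

lemma count_L6 (hfac : IsFactorial L) (n t : ℕ) (ht : t ≤ n) :
    bsC L n ≤ lsC L t * rsC L (n - t) := by
  classical
  set BSn : Set (List A) := {w | w ∈ Ln L n ∧ (LeftSpecialW L w ∧ RightSpecialW L w)} with hBSdef
  set LSt : Set (List A) := {w | w ∈ Ln L t ∧ LeftSpecialW L w} with hLSdef
  set RSd : Set (List A) := {w | w ∈ Ln L (n - t) ∧ RightSpecialW L w} with hRSdef
  have hBSfin : BSn.Finite := finite_sub (fun w hw => hw.1)
  have hLSfin : LSt.Finite := finite_sub (fun w hw => hw.1)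
  have hRSfin : RSd.Finite := finite_sub (fun w hw => hw.1)
  haveI := hBSfin.to_subtype
  haveI := hLSfin.to_subtype
  haveI := hRSfin.to_subtype
  have hmem : ∀ w, w ∈ BSn → (w.take t ∈ LSt ∧ w.drop t ∈ RSd) := by
    intro w hw
    have hlen : w.length = n := hw.1.2
    constructor
    · obtain ⟨b, c, hbc, hb, hc⟩ := hw.2.1
      have hcons : ∀ d : A, (d :: w) ∈ L → d :: w.take t ∈ L := by
        intro d hd
        have : d :: w.take t = (d :: w).take (t+1) := by
          rw [List.take_succ_cons]
        rw [this]
        exact hfac _ _ hd (List.take_prefix _ _).isInfix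
      refine ⟨⟨hfac w _ hw.1.1 (List.take_prefix _ _).isInfix, ?_⟩, b, c, hbc, hcons b hb, hcons c hc⟩
      rw [List.length_take, hlen]
      exact min_eq_left ht
    · obtain ⟨b, c, hbc, hb, hc⟩ := hw.2.2
      have happ : ∀ d : A, (w ++ [d]) ∈ L → w.drop t ++ [d] ∈ L := by
        intro d hd
        have : w.drop t ++ [d] = (w ++ [d]).drop t := by
          rw [List.drop_append_of_le_length (by rw [hlen]; exact ht)]
        rw [this]
        exact hfac _ _ hd (List.drop_suffix _ _).isInfix
      refine ⟨⟨hfac w _ hw.1.1 (List.drop_suffix _ _).isInfix, ?_⟩, b, c, hbc, happ b hb, happ c hc⟩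
      rw [List.length_drop, hlen]
  have key : Nat.card BSn ≤ Nat.card (LSt × RSd) := by
    let F : BSn → LSt × RSd := fun w =>
      (⟨(w : List A).take t, (hmem w.1 w.2).1⟩, ⟨(w : List A).drop t, (hmem w.1 w.2).2⟩)
    apply Nat.card_le_card_of_injective F
    intro w w' h
    rw [Prod.mk.injEq] at h
    have h1 : (w : List A).take t = (w' : List A).take t := congrArg Subtype.val h.1
    have h2 : (w : List A).drop t = (w' : List A).drop t := congrArg Subtype.val h.2
    apply Subtype.ext
    rw [← List.take_append_drop t (w : List A), ← List.take_append_drop t (w' : List A), h1, h2]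
  rw [Nat.card_prod, Nat.card_coe_set_eq, Nat.card_coe_set_eq,
    Nat.card_coe_set_eq, ← bsC_eq, ← lsC_eq, ← rsC_eq] at key
  exact key





lemma tele_rs (L : Set (List A)) (x : ℕ) : ∀ y, x ≤ y →
    (∑ j ∈ Finset.Ico x y, rsC L j) + cplx L x ≤ cplx L y + ∑ j ∈ Finset.Ico x y, eR L j := by
  intro y hy
  induction y, hy using Nat.le_induction with
  | base => simp
  | succ y hxy ih =>
    rw [Finset.sum_Ico_succ_top hxy, Finset.sum_Ico_succ_top hxy]
    have h2 := count_L2 L y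
    omega

lemma tele_ls (L : Set (List A)) (x : ℕ) : ∀ y, x ≤ y →
    (∑ j ∈ Finset.Ico x y, lsC L j) + cplx L x ≤ cplx L y + ∑ j ∈ Finset.Ico x y, eL L j := by
  intro y hy
  induction y, hy using Nat.le_induction with
  | base => simp
  | succ y hxy ih =>
    rw [Finset.sum_Ico_succ_top hxy, Finset.sum_Ico_succ_top hxy]
    have h2 := count_L3 L y
    omega

lemma tele_bs (hfac : IsFactorial L) (j : ℕ) : ∀ n, j ≤ n →
    rsC L n ≤ rsC L j + (Fintype.card A + 1) * ∑ i ∈ Finset.Ico j n, bsC L i := by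
  intro n hn
  induction n, hn using Nat.le_induction with
  | base => simp
  | succ m hjm ih =>
    have h5 := count_L5 hfac m
    rw [Finset.sum_Ico_succ_top hjm, Nat.mul_add]
    calc rsC L (m+1) ≤ rsC L m + (Fintype.card A + 1) * bsC L m :=
          le_trans (Nat.le_add_right _ _) h5
      _ ≤ (rsC L j + (Fintype.card A + 1) * ∑ i ∈ Finset.Ico j m, bsC L i)
            + (Fintype.card A + 1) * bsC L m := Nat.add_le_add_right ih _
      _ = _ := by ring

end Counting

open Filter in
lemma ev_rpow_le {x y : ℝ} (hxy : x < y) (c d : ℝ) (hd : 0 < d) :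
    ∀ᶠ n : ℕ in atTop, c * (n : ℝ) ^ x ≤ d * (n : ℝ) ^ y := by
  have h1 : Filter.Tendsto (fun n : ℕ => ((n : ℝ)) ^ (y - x)) atTop atTop :=
    (tendsto_rpow_atTop (by linarith)).comp tendsto_natCast_atTop_atTop
  filter_upwards [h1.eventually_ge_atTop (c / d), Filter.eventually_ge_atTop 1] with n h2 h3
  have hn : (0:ℝ) < (n : ℝ) := by
    have : (1:ℕ) ≤ n := h3
    exact_mod_cast Nat.lt_of_lt_of_le Nat.zero_lt_one this
  have hsplit : (n:ℝ) ^ y = (n:ℝ) ^ (y - x) * (n:ℝ) ^ x := by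
    rw [← Real.rpow_add hn]
    ring_nf
  have hxpos : (0:ℝ) ≤ (n:ℝ) ^ x := Real.rpow_nonneg hn.le x
  rw [hsplit]
  calc c * (n:ℝ) ^ x = (c / d) * ((n:ℝ) ^ x) * d := by field_simp
    _ ≤ (n:ℝ) ^ (y - x) * ((n:ℝ) ^ x) * d := by
        apply mul_le_mul_of_nonneg_right _ hd.le
        exact mul_le_mul_of_nonneg_right h2 hxpos
    _ = d * ((n:ℝ) ^ (y - x) * (n:ℝ) ^ x) := by ring

set_option maxHeartbeats 3000000 in
open Filter Topology in
lemma main_upper {A : Type*} [Fintype A] {L : Set (List A)} (hfac : IsFactorial L)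
    (α β γ C C₁ C₂ : ℝ) (N₁ : ℕ)
    (hC : 1 ≤ C) (hC₁ : 0 < C₁) (hC₂ : 0 < C₂)
    (hα0 : 0 ≤ α) (hα1 : α ≤ 1) (hαγ : α < γ) (h2αγ : 2*α < γ) (hβ2 : β < 2)
    (hbounds : ∀ m : ℕ, N₁ ≤ m → (eL L m : ℝ) ≤ C * (m:ℝ)^α ∧ (eR L m : ℝ) ≤ C * (m:ℝ)^α ∧
      C₁ * (m:ℝ)^γ ≤ (cplx L m : ℝ) ∧ (cplx L m : ℝ) ≤ C₂ * (m:ℝ)^β)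
    (ε : ℝ) (hε : 0 < ε) (hε1 : ε ≤ 1) :
    ∀ᶠ n : ℕ in atTop, (cplx L (n+1) : ℝ) ≤ (1 + ε) * (cplx L n : ℝ) := by
  classical
  set K : ℝ := ((Fintype.card A + 1 : ℕ) : ℝ) with hKdef
  have hK1 : (1:ℝ) ≤ K := by rw [hKdef]; exact_mod_cast Nat.succ_le_succ (Nat.zero_le _)
  have hK0 : (0:ℝ) < K := by linarith
  have E1 := ev_rpow_le hαγ (8*K*C) (ε*C₁) (by positivity)
  have E3 := ev_rpow_le hβ2 (2^33*K^5*C₂) (ε^2) (by positivity)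
  have E4 := ev_rpow_le h2αγ (2^38*K^3*C^2) (ε^2*C₁) (by positivity)
  have E5 : ∀ᶠ n : ℕ in atTop, 32*K/ε < (n:ℝ) :=
    tendsto_natCast_atTop_atTop.eventually_gt_atTop (32*K/ε)
  have E0 : ∀ᶠ n : ℕ in atTop, 8*N₁ + 100 ≤ n :=
    Filter.eventually_atTop.mpr ⟨8*N₁+100, fun m h => h⟩
  filter_upwards [E0, E1, E3, E4, E5] with n h0 h1 h3 h4 h5
  by_contra hcon
  push_neg at hcon
  have hnN : N₁ ≤ n := by omega
  have hn100 : 100 ≤ n := by omega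
  have hnR : (100:ℝ) ≤ (n:ℝ) := by exact_mod_cast hn100
  have hnpos : (0:ℝ) < (n:ℝ) := by linarith
  set a : ℕ := n / 8 with ha
  have haN : N₁ ≤ a := by omega
  -- fixed casts
  have hc4 : (cplx L (n+1) : ℝ) + (rsC L n : ℝ) ≤ (cplx L n : ℝ) + K * (rsC L n : ℝ) := by
    rw [hKdef]
    exact_mod_cast count_L4 hfac n
  have hrcR : (rsC L n : ℝ) ≤ (cplx L n : ℝ) := by exact_mod_cast rsC_le_cplx L n
  obtain ⟨-, -, hPlb, hPub⟩ := hbounds n hnN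
  set P : ℝ := (cplx L n : ℝ) with hPdef
  set R : ℝ := (rsC L n : ℝ) with hRdef
  have hPpos : (0:ℝ) < P := lt_of_lt_of_le (by positivity) hPlb
  have hP1 : (1:ℝ) ≤ P := by
    have h' : 0 < cplx L n := by
      rw [hPdef] at hPpos
      exact_mod_cast hPpos
    rw [hPdef]
    exact_mod_cast h'
  have hR0 : (0:ℝ) ≤ R := by rw [hRdef]; positivity
  set Eb : ℝ := C * (2*(n:ℝ))^α with hEbdef
  have hEb0 : (0:ℝ) ≤ Eb := by
    rw [hEbdef]
    have h' : (0:ℝ) ≤ (2*(n:ℝ))^α := Real.rpow_nonneg (by linarith) α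
    exact mul_nonneg (by linarith) h'
  set S : ℝ := K * P + 4*(n:ℝ)*Eb with hSdef
  have hS0 : (0:ℝ) < S := by
    rw [hSdef]
    have h' := mul_pos hK0 hPpos
    have h'' : (0:ℝ) ≤ 4*(n:ℝ)*Eb := mul_nonneg (by linarith) hEb0
    linarith
  set Lam : ℝ := 32*S/(n:ℝ) with hLam
  have hLam0 : (0:ℝ) < Lam := by rw [hLam]; exact div_pos (by linarith) hnpos
  set B : ℝ := Lam^2 with hBdef
  have hB0 : (0:ℝ) < B := by rw [hBdef]; exact pow_pos hLam0 2
  have hKB : (0:ℝ) < K * B := mul_pos hK0 hB0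
  -- K*P bound for cplx (n+1)
  have hKP : (cplx L (n+1) : ℝ) ≤ K * P := by
    have hprod := mul_nonneg (show (0:ℝ) ≤ K - 1 by linarith)
      (show (0:ℝ) ≤ P - R by linarith)
    have hexp : (K - 1) * (P - R) = K*P - K*R - P + R := by ring
    rw [hexp] at hprod
    linarith [hc4]
  -- ε P < K R
  have hR : ε * P < K * R := by linarith [hcon, hc4, hR0]
  -- per-level e bounds
  have hEbj : ∀ j : ℕ, a ≤ j → j ≤ n + 1 → (eL L j : ℝ) ≤ Eb ∧ (eR L j : ℝ) ≤ Eb := by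
    intro j hj1 hj2
    obtain ⟨hl, hr, -, -⟩ := hbounds j (le_trans haN hj1)
    have hjle : ((j:ℝ)) ≤ 2*(n:ℝ) := by
      have hcast : (j:ℝ) ≤ (n:ℝ) + 1 := by exact_mod_cast hj2
      linarith
    have hmono : ((j:ℝ))^α ≤ (2*(n:ℝ))^α :=
      Real.rpow_le_rpow (by positivity) hjle hα0
    have hj' : C * ((j:ℝ))^α ≤ Eb := by
      rw [hEbdef]
      exact mul_le_mul_of_nonneg_left hmono (by linarith)
    exact ⟨le_trans hl hj', le_trans hr hj'⟩
  -- sum bounds on a window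
  have hsumER : ∀ x y : ℕ, a ≤ x → y ≤ n+1 →
      (∑ j ∈ Finset.Ico x y, (eR L j : ℝ)) ≤ ((y - x : ℕ) : ℝ) * Eb := by
    intro x y hx hy
    calc (∑ j ∈ Finset.Ico x y, (eR L j : ℝ)) ≤ (Finset.Ico x y).card • Eb := by
          apply Finset.sum_le_card_nsmul
          intro j hj
          rw [Finset.mem_Ico] at hj
          exact (hEbj j (le_trans hx hj.1) (by omega)).2
      _ = ((y - x : ℕ) : ℝ) * Eb := by rw [Nat.card_Ico, nsmul_eq_mul]
  have hsumEL : ∀ x y : ℕ, a ≤ x → y ≤ n+1 →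
      (∑ j ∈ Finset.Ico x y, (eL L j : ℝ)) ≤ ((y - x : ℕ) : ℝ) * Eb := by
    intro x y hx hy
    calc (∑ j ∈ Finset.Ico x y, (eL L j : ℝ)) ≤ (Finset.Ico x y).card • Eb := by
          apply Finset.sum_le_card_nsmul
          intro j hj
          rw [Finset.mem_Ico] at hj
          exact (hEbj j (le_trans hx hj.1) (by omega)).1
      _ = ((y - x : ℕ) : ℝ) * Eb := by rw [Nat.card_Ico, nsmul_eq_mul]
  -- total special sums ≤ S
  have hSls : (∑ j ∈ Finset.Ico a (n+1), (lsC L j : ℝ)) ≤ S := by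
    have ht := tele_ls L a (n+1) (by omega)
    have hc : (∑ j ∈ Finset.Ico a (n+1), (lsC L j : ℝ)) + (cplx L a : ℝ)
        ≤ (cplx L (n+1) : ℝ) + ∑ j ∈ Finset.Ico a (n+1), (eL L j : ℝ) := by
      exact_mod_cast ht
    have h0' : (0:ℝ) ≤ (cplx L a : ℝ) := by positivity
    have hel := hsumEL a (n+1) le_rfl le_rfl
    have hcard : (((n+1) - a : ℕ) : ℝ) ≤ 2*(n:ℝ) := by
      have hcc : (n+1) - a ≤ 2*n := by omega
      exact_mod_cast hcc
    have h2' : (((n+1) - a : ℕ) : ℝ) * Eb ≤ 2*(n:ℝ)*Eb := mul_le_mul_of_nonneg_right hcard hEb0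
    rw [hSdef]
    linarith [mul_nonneg hnpos.le hEb0]
  have hSrs : (∑ j ∈ Finset.Ico a (n+1), (rsC L j : ℝ)) ≤ S := by
    have ht := tele_rs L a (n+1) (by omega)
    have hc : (∑ j ∈ Finset.Ico a (n+1), (rsC L j : ℝ)) + (cplx L a : ℝ)
        ≤ (cplx L (n+1) : ℝ) + ∑ j ∈ Finset.Ico a (n+1), (eR L j : ℝ) := by
      exact_mod_cast ht
    have h0' : (0:ℝ) ≤ (cplx L a : ℝ) := by positivity
    have hel := hsumER a (n+1) le_rfl le_rfl
    have hcard : (((n+1) - a : ℕ) : ℝ) ≤ 2*(n:ℝ) := by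
      have hcc : (n+1) - a ≤ 2*n := by omega
      exact_mod_cast hcc
    have h2' : (((n+1) - a : ℕ) : ℝ) * Eb ≤ 2*(n:ℝ)*Eb := mul_le_mul_of_nonneg_right hcard hEb0
    rw [hSdef]
    linarith [mul_nonneg hnpos.le hEb0]
  -- bad sets
  set badL : Finset ℕ := (Finset.Ico a (n+1)).filter (fun t => Lam < (lsC L t : ℝ)) with hbadL
  set badR : Finset ℕ := (Finset.Ico a (n+1)).filter (fun t => Lam < (rsC L t : ℝ)) with hbadR
  have hbadLcard : (badL.card : ℝ) * 32 ≤ (n:ℝ) := by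
    have hle : (badL.card : ℝ) * Lam ≤ S := by
      calc (badL.card : ℝ) * Lam = badL.card • Lam := (nsmul_eq_mul _ _).symm
        _ ≤ ∑ t ∈ badL, (lsC L t : ℝ) :=
            Finset.card_nsmul_le_sum badL _ _
              (fun t ht => (le_of_lt (Finset.mem_filter.mp ht).2))
        _ ≤ ∑ j ∈ Finset.Ico a (n+1), (lsC L j : ℝ) :=
            Finset.sum_le_sum_of_subset_of_nonneg (Finset.filter_subset _ _)
              (fun j _ _ => by positivity)
        _ ≤ S := hSls
    rw [hLam] at hle
    have h2 := mul_le_mul_of_nonneg_right hle hnpos.le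
    rw [mul_assoc, div_mul_cancel₀ _ hnpos.ne'] at h2
    have h3' : (badL.card : ℝ) * 32 * S ≤ (n:ℝ) * S := by linarith
    exact le_of_mul_le_mul_right h3' hS0
  have hbadRcard : (badR.card : ℝ) * 32 ≤ (n:ℝ) := by
    have hle : (badR.card : ℝ) * Lam ≤ S := by
      calc (badR.card : ℝ) * Lam = badR.card • Lam := (nsmul_eq_mul _ _).symm
        _ ≤ ∑ t ∈ badR, (rsC L t : ℝ) :=
            Finset.card_nsmul_le_sum badR _ _
              (fun t ht => (le_of_lt (Finset.mem_filter.mp ht).2))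
        _ ≤ ∑ j ∈ Finset.Ico a (n+1), (rsC L j : ℝ) :=
            Finset.sum_le_sum_of_subset_of_nonneg (Finset.filter_subset _ _)
              (fun j _ _ => by positivity)
        _ ≤ S := hSrs
    rw [hLam] at hle
    have h2 := mul_le_mul_of_nonneg_right hle hnpos.le
    rw [mul_assoc, div_mul_cancel₀ _ hnpos.ne'] at h2
    have h3' : (badR.card : ℝ) * 32 * S ≤ (n:ℝ) * S := by linarith
    exact le_of_mul_le_mul_right h3' hS0
  have hbL : badL.card * 32 ≤ n := by exact_mod_cast hbadLcard
  have hbR : badR.card * 32 ≤ n := by exact_mod_cast hbadRcard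
  -- per-level bispecial bound
  have hBlevel : ∀ i : ℕ, n - n/4 ≤ i → i ≤ n → (bsC L i : ℝ) ≤ B := by
    intro i hi1 hi2
    have hcard2 : ((Finset.Ico a (2*a)).filter (fun t => (i - t) ∈ badR)).card ≤ badR.card := by
      apply Finset.card_le_card_of_injOn (fun t => i - t)
      · intro t ht
        exact (Finset.mem_filter.mp ht).2
      · intro t ht t' ht' hEq
        have h1' := Finset.mem_Ico.mp (Finset.filter_subset _ _ (Finset.mem_coe.mp ht))
        have h2' := Finset.mem_Ico.mp (Finset.filter_subset _ _ (Finset.mem_coe.mp ht'))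
        have hEq' : i - t = i - t' := hEq
        omega
    have hcard1 : ((Finset.Ico a (2*a)).filter (fun t => t ∈ badL)).card ≤ badL.card :=
      Finset.card_le_card (fun t ht => (Finset.mem_filter.mp ht).2)
    have hex : ∃ t ∈ Finset.Ico a (2*a), ¬(t ∈ badL ∨ (i - t) ∈ badR) := by
      by_contra hno
      push_neg at hno
      have hsub : Finset.Ico a (2*a) ⊆
          ((Finset.Ico a (2*a)).filter (fun t => t ∈ badL)) ∪
          ((Finset.Ico a (2*a)).filter (fun t => (i - t) ∈ badR)) := by
        intro t ht
        rcases hno t ht with h | h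
        · exact Finset.mem_union_left _ (Finset.mem_filter.mpr ⟨ht, h⟩)
        · exact Finset.mem_union_right _ (Finset.mem_filter.mpr ⟨ht, h⟩)
      have hcc := Finset.card_le_card hsub
      have hcu := Finset.card_union_le ((Finset.Ico a (2*a)).filter (fun t => t ∈ badL))
        ((Finset.Ico a (2*a)).filter (fun t => (i - t) ∈ badR))
      have hIcoCard : (Finset.Ico a (2*a)).card = a := by rw [Nat.card_Ico]; omega
      omega
    obtain ⟨t, htmem, htbad⟩ := hex
    rw [Finset.mem_Ico] at htmem
    push_neg at htbad
    have hls : (lsC L t : ℝ) ≤ Lam := by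
      by_contra hlt
      push_neg at hlt
      exact htbad.1 (Finset.mem_filter.mpr ⟨Finset.mem_Ico.mpr (by omega), hlt⟩)
    have hrs : (rsC L (i - t) : ℝ) ≤ Lam := by
      by_contra hlt
      push_neg at hlt
      exact htbad.2 (Finset.mem_filter.mpr ⟨Finset.mem_Ico.mpr (by omega), hlt⟩)
    have h6 : (bsC L i : ℝ) ≤ (lsC L t : ℝ) * (rsC L (i - t) : ℝ) := by
      exact_mod_cast count_L6 hfac i t (by omega)
    calc (bsC L i : ℝ) ≤ (lsC L t : ℝ) * (rsC L (i - t) : ℝ) := h6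
      _ ≤ Lam * Lam := mul_le_mul hls hrs (by positivity) hLam0.le
      _ = B := by rw [hBdef]; ring
  -- backward propagation
  have hback : ∀ j : ℕ, n - n/4 ≤ j → j ≤ n →
      R ≤ (rsC L j : ℝ) + K * (((n - j : ℕ) : ℝ) * B) := by
    intro j hj1 hj2
    have ht := tele_bs hfac j n hj2
    have hc : R ≤ (rsC L j : ℝ)
        + K * ((∑ i ∈ Finset.Ico j n, bsC L i : ℕ) : ℝ) := by
      rw [hRdef, hKdef]
      exact_mod_cast ht
    have hsum : ((∑ i ∈ Finset.Ico j n, bsC L i : ℕ) : ℝ) ≤ ((n - j : ℕ) : ℝ) * B := by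
      push_cast
      calc (∑ i ∈ Finset.Ico j n, (bsC L i : ℝ)) ≤ (Finset.Ico j n).card • B := by
            apply Finset.sum_le_card_nsmul
            intro i hi
            rw [Finset.mem_Ico] at hi
            exact hBlevel i (by omega) (by omega)
        _ = ((n - j : ℕ) : ℝ) * B := by rw [Nat.card_Ico, nsmul_eq_mul]
    have hmul := mul_le_mul_of_nonneg_left hsum hK0.le
    linarith
  -- Eb is small compared to R
  have hEb2 : Eb ≤ 2*C*(n:ℝ)^α := by
    rw [hEbdef]
    have h2a : (2*(n:ℝ))^α = (2:ℝ)^α * (n:ℝ)^α := Real.mul_rpow (by norm_num) hnpos.le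
    rw [h2a]
    have h2b : (2:ℝ)^α ≤ 2 := by
      calc (2:ℝ)^α ≤ (2:ℝ)^(1:ℝ) := Real.rpow_le_rpow_of_exponent_le (by norm_num) hα1
        _ = 2 := Real.rpow_one 2
    have hnn := Real.rpow_nonneg hnpos.le α
    have hm := mul_le_mul_of_nonneg_right (mul_le_mul_of_nonneg_left h2b
      (show (0:ℝ) ≤ C by linarith)) hnn
    linarith [hm]
  have hEbR : 4 * Eb ≤ R := by
    have h8 : 4*K*Eb ≤ 8*K*C*(n:ℝ)^α := by
      have hm := mul_le_mul_of_nonneg_left hEb2 (show (0:ℝ) ≤ 4*K by linarith)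
      linarith [hm]
    have h9 : ε*(C₁*(n:ℝ)^γ) ≤ ε*P := mul_le_mul_of_nonneg_left hPlb hε.le
    have h10 : K*(4*Eb) < K*R := by linarith [h1, h8, h9, hR]
    exact (lt_of_mul_lt_mul_left h10 hK0.le).le
  -- window argument
  have hwin : ∀ D : ℕ, 1 ≤ D → 4*D ≤ n → K*(D:ℝ)*B ≤ R/2 → (D:ℝ)*R ≤ 4*P := by
    intro D hD1 hD4 hDB
    have hjlow : ∀ j, n - D ≤ j → j ≤ n → R/2 ≤ (rsC L j : ℝ) := by
      intro j hj1 hj2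
      have hb := hback j (by omega) hj2
      have hle : (((n - j : ℕ)) : ℝ) ≤ (D : ℝ) := by
        exact_mod_cast (show n - j ≤ D by omega)
      have hmm : K * (((n - j : ℕ) : ℝ) * B) ≤ K*(D:ℝ)*B := by
        have h' := mul_le_mul_of_nonneg_right hle hB0.le
        have h'' := mul_le_mul_of_nonneg_left h' hK0.le
        linarith [h'']
      linarith
    have hcard : (Finset.Ico (n - D) n).card = D := by rw [Nat.card_Ico]; omega
    have hlow : (D:ℝ) * (R/2) ≤ ∑ j ∈ Finset.Ico (n-D) n, (rsC L j : ℝ) := by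
      calc (D:ℝ) * (R/2) = (Finset.Ico (n-D) n).card • (R/2) := by
            rw [hcard, nsmul_eq_mul]
        _ ≤ _ := Finset.card_nsmul_le_sum _ _ _ (fun j hj => by
            rw [Finset.mem_Ico] at hj
            exact hjlow j (by omega) (by omega))
    have ht := tele_rs L (n-D) n (by omega)
    have hup1 : (∑ j ∈ Finset.Ico (n-D) n, (rsC L j : ℝ))
        ≤ P + ∑ j ∈ Finset.Ico (n-D) n, (eR L j : ℝ) := by
      have hc : (∑ j ∈ Finset.Ico (n-D) n, (rsC L j : ℝ)) + (cplx L (n-D) : ℝ)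
          ≤ P + ∑ j ∈ Finset.Ico (n-D) n, (eR L j : ℝ) := by
        rw [hPdef]
        exact_mod_cast ht
      have h0' : (0:ℝ) ≤ (cplx L (n-D) : ℝ) := by positivity
      linarith
    have her := hsumER (n-D) n (by omega) (by omega)
    have hDn : ((n - (n-D) : ℕ) : ℝ) = (D:ℝ) := by
      have : n - (n - D) = D := by omega
      rw [this]
    rw [hDn] at her
    have hDEb : (D:ℝ)*Eb ≤ (D:ℝ)*(R/4) :=
      mul_le_mul_of_nonneg_left (by linarith) (by positivity)
    linarith
  -- the final contradiction device
  have hZfalse : ¬ (ε^2*P < 2^20*K^3*B) := by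
    intro hZ
    have hn2 : (0:ℝ) < (n:ℝ)^2 := by positivity
    have hBn2 : B * (n:ℝ)^2 = 1024*S^2 := by
      rw [hBdef, hLam]
      field_simp
      ring
    have hS2 : S^2 ≤ 2*(K*P)^2 + 32*((n:ℝ)*Eb)^2 := by
      rw [hSdef]
      linarith only [sq_nonneg (K*P - 4*(n:ℝ)*Eb)]
    have hZ2 : ε^2*P*(n:ℝ)^2 < 2^30*K^3*S^2 := by
      have hml := mul_lt_mul_of_pos_right hZ hn2
      calc ε^2*P*(n:ℝ)^2 < 2^20*K^3*B*(n:ℝ)^2 := hml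
        _ = 2^20*K^3*(B*(n:ℝ)^2) := by ring
        _ = 2^20*K^3*(1024*S^2) := by rw [hBn2]
        _ = 2^30*K^3*S^2 := by ring
    have hKP2 : 2^30*K^3*S^2 ≤ 2^31*K^5*P^2 + 2^35*K^3*((n:ℝ)*Eb)^2 := by
      have hm := mul_le_mul_of_nonneg_left hS2
        (show (0:ℝ) ≤ 2^30*K^3 by positivity)
      linarith [hm]
    have hn2' : (n:ℝ)^(2:ℝ) = (n:ℝ)^2 := by
      rw [show ((2:ℝ)) = ((2:ℕ):ℝ) by norm_num, Real.rpow_natCast]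
    have h3' : 2^33*K^5*P ≤ ε^2*(n:ℝ)^2 := by
      rw [← hn2']
      calc 2^33*K^5*P ≤ 2^33*K^5*(C₂*(n:ℝ)^β) := by
            have hm := mul_le_mul_of_nonneg_left hPub
              (show (0:ℝ) ≤ 2^33*K^5 by positivity)
            linarith [hm]
        _ = 2^33*K^5*C₂*(n:ℝ)^β := by ring
        _ ≤ ε^2*(n:ℝ)^(2:ℝ) := h3
    have hi : 2^31*K^5*P^2 ≤ ε^2*P*(n:ℝ)^2/4 := by
      have hm := mul_le_mul_of_nonneg_right h3' hPpos.le
      linarith [hm]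
    have hE2 : Eb^2 ≤ 4*C^2*((n:ℝ)^α)^2 := by
      have hm := mul_self_le_mul_self hEb0 hEb2
      linarith [hm]
    have hαα : ((n:ℝ)^α)^2 = (n:ℝ)^(2*α) := by
      rw [← Real.rpow_natCast ((n:ℝ)^α) 2, ← Real.rpow_mul hnpos.le]
      norm_num
      ring_nf
    rw [hαα] at hE2
    have h4' : 2^38*K^3*C^2*(n:ℝ)^(2*α) ≤ ε^2*P := by
      calc 2^38*K^3*C^2*(n:ℝ)^(2*α) ≤ ε^2*C₁*(n:ℝ)^γ := h4
        _ ≤ ε^2*P := by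
            have hm := mul_le_mul_of_nonneg_left hPlb (sq_nonneg ε)
            linarith [hm]
    have hii : 2^35*K^3*((n:ℝ)*Eb)^2 ≤ ε^2*P*(n:ℝ)^2/2 := by
      have m1 := mul_le_mul_of_nonneg_left hE2
        (show (0:ℝ) ≤ 2^35*K^3*(n:ℝ)^2 by positivity)
      have m2 := mul_le_mul_of_nonneg_right h4'
        (show (0:ℝ) ≤ (n:ℝ)^2/2 by positivity)
      linarith [m1, m2]
    linarith [hZ2, hKP2, hi, hii,
      mul_pos (mul_pos (pow_pos hε 2) hPpos) hn2]
  -- cases on the floor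
  set x : ℝ := R/(2*K*B) with hx
  set D₀ : ℕ := ⌊x⌋₊ with hD₀
  have hxnn : (0:ℝ) ≤ x := by
    rw [hx]
    exact div_nonneg hR0 (by linarith [hKB])
  rcases Nat.eq_zero_or_pos D₀ with hD0 | hD0pos
  · have hfl : ⌊x⌋₊ = 0 := by rw [← hD₀]; exact hD0
    have hx1 : x < 1 := by
      rcases Nat.floor_eq_zero.mp hfl with h
      exact h
    have hRB : R < 2*K*B := by
      rw [hx, div_lt_one (by linarith [hKB])] at hx1
      exact hx1
    apply hZfalse
    have s1 : K*R < K*(2*K*B) := mul_lt_mul_of_pos_left hRB hK0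
    have s2 : ε*P < 2*K^2*B := by linarith [hR, s1]
    have s3 : ε^2*P ≤ ε*P := by
      have hm := mul_nonneg (mul_pos hε hPpos).le (sub_nonneg.mpr hε1)
      linarith [hm]
    have s4 : 2*K^2*B ≤ 2^20*K^3*B := by
      have hm := mul_nonneg (mul_nonneg (show (0:ℝ) ≤ 2^20*K - 2 by linarith)
        (mul_pos hK0 hK0).le) hB0.le
      linarith [hm]
    linarith
  · have hfloor_le : (D₀:ℝ) ≤ x := by rw [hD₀]; exact Nat.floor_le hxnn
    have hxB : K*x*B = R/2 := by
      rw [hx]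
      field_simp
    rcases le_or_gt (4*D₀) n with hD4 | hD4
    · -- main case
      have hKD : K*(D₀:ℝ)*B ≤ R/2 := by
        have hm := mul_le_mul_of_nonneg_right
          (mul_le_mul_of_nonneg_left hfloor_le hK0.le) hB0.le
        linarith [hxB, hm]
      have hDR := hwin D₀ hD0pos hD4 hKD
      have hhalf : x/2 ≤ (D₀:ℝ) := by
        rcases le_or_gt x 2 with h | h
        · have h1' : (1:ℝ) ≤ (D₀:ℝ) := by exact_mod_cast hD0pos
          linarith
        · have hsf := Nat.sub_one_lt_floor x
          rw [← hD₀] at hsf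
          linarith
      have h1' : (x/2)*R ≤ 4*P := by
        have hm := mul_le_mul_of_nonneg_right hhalf hR0
        linarith [hm, hDR]
      rw [hx] at h1'
      have hRR : R*R ≤ 16*K*B*P := by
        rw [div_div, div_mul_eq_mul_div, div_le_iff₀ (by linarith [hKB])] at h1'
        linarith [h1']
      apply hZfalse
      have hsq : (ε*P)*(ε*P) < (K*R)*(K*R) :=
        mul_lt_mul'' hR hR (mul_pos hε hPpos).le (mul_pos hε hPpos).le
      have h16 : (K*R)*(K*R) ≤ 16*K^3*B*P := by
        have hm := mul_le_mul_of_nonneg_left hRR (sq_nonneg K)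
        linarith [hm]
      have h18 : (ε^2*P)*P < (16*K^3*B)*P := by linarith [lt_of_lt_of_le hsq h16]
      have h17 : ε^2*P < 16*K^3*B := lt_of_mul_lt_mul_right h18 hPpos.le
      have hm := mul_nonneg (mul_nonneg (show (0:ℝ) ≤ 2^20 - 16 by norm_num)
        (pow_pos hK0 3).le) hB0.le
      linarith [h17, hm]
    · -- wide case
      set D' : ℕ := n/4 with hD'
      have hD'1 : 1 ≤ D' := by omega
      have hD'4 : 4*D' ≤ n := by omega
      have hD'le : (D':ℝ) ≤ x := by
        have hdd : D' ≤ D₀ := by omega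
        have hdd' : (D':ℝ) ≤ (D₀:ℝ) := by exact_mod_cast hdd
        linarith
      have hKD : K*(D':ℝ)*B ≤ R/2 := by
        have hm := mul_le_mul_of_nonneg_right
          (mul_le_mul_of_nonneg_left hD'le hK0.le) hB0.le
        linarith [hxB, hm]
      have hDR := hwin D' hD'1 hD'4 hKD
      have hD'ge : ((n:ℝ) - 3)/4 ≤ (D':ℝ) := by
        have h4' : n - 3 ≤ 4 * D' := by omega
        have h4'' : ((n - 3 : ℕ):ℝ) ≤ 4*(D':ℝ) := by exact_mod_cast h4'
        rw [Nat.cast_sub (by omega)] at h4''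
        push_cast at h4''
        linarith
      have hnR3 : ((n:ℝ) - 3)*R ≤ 16*P := by
        have hm := mul_le_mul_of_nonneg_right hD'ge hR0
        linarith [hm, hDR]
      have hfin : ((n:ℝ)-3)*ε*P < 16*K*P := by
        have hm1 := mul_lt_mul_of_pos_left hR (show (0:ℝ) < (n:ℝ)-3 by linarith)
        have hm2 := mul_le_mul_of_nonneg_left hnR3 hK0.le
        linarith [hm1, hm2]
      have hdiv : ((n:ℝ)-3)*ε < 16*K := by
        have hfin' : (((n:ℝ)-3)*ε)*P < (16*K)*P := by linarith [hfin]
        exact lt_of_mul_lt_mul_right hfin' hPpos.le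
      have h5' : 32*K < ε*(n:ℝ) := by
        rw [div_lt_iff₀ hε] at h5
        linarith [h5]
      linarith [hdiv, h5', hε1, hK1, hε]

theorem complexity_ratio_tendsto_one_of_polynomial_bounds {A : Type*} [Fintype A]
    (L : Set (List A)) (hfac : IsFactorial L) (hap : AlmostProlongable L)
    (hunb : ∀ M : ℕ, ∃ n : ℕ, M < cplx L n)
    (N₀ : ℕ) (he : ∀ n ≥ N₀, eBoth L n = 0)
    (α β γ : ℝ) (hα : α ∈ Set.Ico (0 : ℝ) (1 / 2)) (hβ : β ∈ Set.Ico (1 : ℝ) (3 / 2))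
    (hγ : γ ∈ Set.Ioc (3 * max α (β - 1)) β)
    (helO : ∃ C : ℝ, ∃ N : ℕ, ∀ n ≥ N, (eL L n : ℝ) ≤ C * (n : ℝ) ^ α)
    (herO : ∃ C : ℝ, ∃ N : ℕ, ∀ n ≥ N, (eR L n : ℝ) ≤ C * (n : ℝ) ^ α)
    (C₁ C₂ : ℝ) (hC₁ : 0 < C₁) (hC₂ : 0 < C₂)
    (hbound : ∃ N : ℕ, ∀ n ≥ N,
      C₁ * (n : ℝ) ^ γ ≤ (cplx L n : ℝ) ∧ (cplx L n : ℝ) ≤ C₂ * (n : ℝ) ^ β) :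
    Tendsto (fun n => (cplx L (n + 1) : ℝ) / (cplx L n : ℝ)) atTop (𝓝 1) := by
  classical
  obtain ⟨hα0, hα12⟩ := hα
  obtain ⟨hβ1, hβ32⟩ := hβ
  obtain ⟨hγ3, hγβ⟩ := hγ
  obtain ⟨Cl, Nl, hCl⟩ := helO
  obtain ⟨Cr, Nr, hCr⟩ := herO
  obtain ⟨Nb, hNb⟩ := hbound
  set C : ℝ := max (max Cl Cr) 1 with hCdef
  have hC1 : (1:ℝ) ≤ C := le_max_right _ _
  set N₁ : ℕ := max (max Nl Nr) (max Nb 1) with hN₁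
  have hbounds : ∀ m : ℕ, N₁ ≤ m → (eL L m : ℝ) ≤ C * (m:ℝ)^α ∧ (eR L m : ℝ) ≤ C * (m:ℝ)^α ∧
      C₁ * (m:ℝ)^γ ≤ (cplx L m : ℝ) ∧ (cplx L m : ℝ) ≤ C₂ * (m:ℝ)^β := by
    intro m hm
    have hnn : (0:ℝ) ≤ (m:ℝ)^α := Real.rpow_nonneg (by positivity) α
    have h1 := hCl m (by omega)
    have h2 := hCr m (by omega)
    have h3 := hNb m (by omega)
    refine ⟨le_trans h1 ?_, le_trans h2 ?_, h3.1, h3.2⟩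
    · exact mul_le_mul_of_nonneg_right (le_trans (le_max_left Cl Cr) (le_max_left _ 1)) hnn
    · exact mul_le_mul_of_nonneg_right (le_trans (le_max_right Cl Cr) (le_max_left _ 1)) hnn
  -- exponent facts
  have hMα := le_max_left α (β - 1)
  have hM0 : (0:ℝ) ≤ max α (β - 1) := le_trans hα0 hMα
  have hαγ : α < γ := by linarith
  have h2αγ : 2*α < γ := by linarith
  have hβ2 : β < 2 := by linarith
  have hα1 : α ≤ 1 := by linarith
  -- positivity of cplx
  have hpos_at : ∀ n : ℕ, N₁ ≤ n → 1 ≤ n → 0 < cplx L n := by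
    intro n h1 h2
    have hb := (hbounds n h1).2.2.1
    have hnp : (0:ℝ) < (n:ℝ) := by exact_mod_cast h2
    have hpow : (0:ℝ) < C₁*(n:ℝ)^γ := mul_pos hC₁ (Real.rpow_pos_of_pos hnp γ)
    have : (0:ℝ) < (cplx L n : ℝ) := lt_of_lt_of_le hpow hb
    exact_mod_cast this
  have hppos : ∀ᶠ n : ℕ in atTop, 0 < cplx L n := by
    filter_upwards [Filter.eventually_ge_atTop (max N₁ 1)] with n hn
    exact hpos_at n (by omega) (by omega)
  -- the alphabet is nonempty
  have hcard : 1 ≤ Fintype.card A := by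
    have h2 : 0 < cplx L (max N₁ 1) := hpos_at _ (by omega) (by omega)
    have hne : (Ln L (max N₁ 1)).Nonempty := by
      apply Set.nonempty_of_ncard_ne_zero
      rw [← cplx_eq]
      omega
    obtain ⟨w, hw⟩ := hne
    have hlen : w.length = max N₁ 1 := hw.2
    have hwne : w ≠ [] := by
      intro h
      rw [h] at hlen
      simp at hlen
      omega
    have : Nonempty A := ⟨w.head hwne⟩
    exact Fintype.card_pos
  -- lower eventual bound
  have hlow : ∀ δ : ℝ, 0 < δ → ∀ᶠ n : ℕ in atTop,
      (1 - δ) * (cplx L n : ℝ) ≤ (cplx L (n+1) : ℝ) := by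
    intro δ hδ
    obtain ⟨N', hN'⟩ := Metric.tendsto_atTop.mp hap.2 δ hδ
    filter_upwards [Filter.eventually_ge_atTop N', hppos] with n h4 h5
    have hp : (0:ℝ) < (cplx L n : ℝ) := by exact_mod_cast h5
    have h6 : (eR L n : ℝ) < δ * (cplx L n : ℝ) := by
      have hd := hN' n h4
      rw [Real.dist_eq, sub_zero, abs_of_nonneg (by positivity)] at hd
      have := (div_lt_iff₀ hp).mp hd
      linarith
    have h7 : cplx L n ≤ cplx L (n+1) + eR L n := by
      have := count_L2 L n
      omega
    have h8 : (cplx L n : ℝ) ≤ (cplx L (n+1) : ℝ) + (eR L n : ℝ) := by exact_mod_cast h7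
    linarith only [h6, h8]
  -- assemble
  rw [Metric.tendsto_atTop]
  intro ε hε
  set ε' : ℝ := min (ε/2) 1 with hε'
  have hε'0 : 0 < ε' := lt_min (by linarith) one_pos
  have hε'1 : ε' ≤ 1 := min_le_right _ _
  have hup := main_upper hfac α β γ C C₁ C₂ N₁ hC1 hC₁ hC₂ hα0 hα1 hαγ h2αγ hβ2 hbounds
    ε' hε'0 hε'1
  have hlo := hlow ε' hε'0
  obtain ⟨N, hN⟩ := Filter.eventually_atTop.mp (hup.and (hlo.and hppos))
  refine ⟨N, fun n hn => ?_⟩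
  obtain ⟨hu, hl, hp⟩ := hN n hn
  have hp' : (0:ℝ) < (cplx L n : ℝ) := by exact_mod_cast hp
  show dist ((cplx L (n+1) : ℝ) / (cplx L n : ℝ)) 1 < ε
  rw [Real.dist_eq]
  have h9 : (cplx L (n+1) : ℝ)/(cplx L n : ℝ) - 1 ≤ ε' := by
    rw [div_sub_one hp'.ne', div_le_iff₀ hp']
    linarith [hu]
  have h10 : -ε' ≤ (cplx L (n+1) : ℝ)/(cplx L n : ℝ) - 1 := by
    rw [div_sub_one hp'.ne', le_div_iff₀ hp']
    linarith [hl]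
  have habs : |(cplx L (n+1) : ℝ)/(cplx L n : ℝ) - 1| ≤ ε' := abs_le.mpr ⟨h10, h9⟩
  have hεε : ε' < ε := lt_of_le_of_lt (min_le_left _ _) (by linarith)
  linarith
end
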